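/- arXiv:2508.01891 — 2 statements merged into one kernel-verified Lean document; each statement's English description precedes it below -/
import Mathlib

section
/- Let A : ℕ^d → Matrix (Fin s) (Fin s) ℝ with A(0) invertible. Then A has a unique two-sided convolutional inverse A^(-1), and for each k ∈ ℕ^d, A^(-1)(k) = [A(0)]^{-1} · Σ_{n=0}^{k₁+⋯+k_d} (𝕀 − A₀)^(n)(k), where A₀(l) = A(l)·[A(0)]^{-1}. -/
/-!
Write `A₀ l = A l * (A 0)⁻¹` and `C = 𝕀 - A₀`. Since `C 0 = 0`, the power `C^(n)` vanishes on
every `k` with `k₁ + ⋯ + k_d < n`, so the Neumann series `S = Σₙ C^(n)` is a finite sum at each `k`,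
and the telescoping identities `(𝕀 - C) * Σ_{n<N} C^(n) = 𝕀 - C^(N) = (Σ_{n<N} C^(n)) * (𝕀 - C)`
make `S` a two-sided inverse of `A₀`. Hence `(A 0)⁻¹ * S` is a two-sided inverse of `A`, and
associativity of convolution makes two-sided inverses unique.
-/

noncomputable def conv {d s : ℕ} (A B : (Fin d → ℕ) → Matrix (Fin s) (Fin s) ℝ) :
    (Fin d → ℕ) → Matrix (Fin s) (Fin s) ℝ :=
  fun k => ∑ l ∈ Finset.Iic k, A l * B (k - l)

noncomputable def oneSeq {d s : ℕ} : (Fin d → ℕ) → Matrix (Fin s) (Fin s) ℝ :=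
  fun k => if k = 0 then 1 else 0

noncomputable def convPow {d s : ℕ} (A : (Fin d → ℕ) → Matrix (Fin s) (Fin s) ℝ) :
    ℕ → (Fin d → ℕ) → Matrix (Fin s) (Fin s) ℝ
  | 0 => oneSeq
  | n + 1 => conv A (convPow A n)

open Finset

lemma sum_tsub_lt_sum {d : ℕ} {k l : Fin d → ℕ} (hlk : l ≤ k) (hl : l ≠ 0) :
    ∑ i, (k - l) i < ∑ i, k i := by
  obtain ⟨j, hj⟩ := Function.ne_iff.mp hl
  refine sum_lt_sum (fun i _ => tsub_le_self) ⟨j, mem_univ j, ?_⟩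
  have hj_pos : 0 < l j := Nat.pos_of_ne_zero hj
  exact tsub_lt_self (hj_pos.trans_le (hlk j)) hj_pos

section Convolution

variable {d s : ℕ} (A B C : (Fin d → ℕ) → Matrix (Fin s) (Fin s) ℝ)

lemma oneSeq_conv : conv oneSeq A = A := by
  funext k
  rw [conv, sum_eq_single 0]
  · simp [oneSeq]
  · intro l _ hl
    simp [oneSeq, hl]
  · simp

lemma conv_oneSeq : conv A oneSeq = A := by
  funext k
  rw [conv, sum_eq_single k]
  · simp [oneSeq]
  · intro l hl hlk
    have : k - l ≠ 0 := fun h => hlk (le_antisymm (mem_Iic.mp hl) (tsub_eq_zero_iff_le.mp h))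
    simp [oneSeq, this]
  · simp

lemma conv_assoc : conv (conv A B) C = conv A (conv B C) := by
  funext k
  simp only [conv, sum_mul, mul_sum]
  rw [sum_sigma', sum_sigma']
  refine sum_nbij' (fun p => ⟨p.2, p.1 - p.2⟩) (fun p => ⟨p.1 + p.2, p.1⟩) ?_ ?_ ?_ ?_ ?_
  · rintro ⟨l, m⟩ h
    simp only [mem_sigma, mem_Iic] at h ⊢
    exact ⟨h.2.trans h.1, tsub_le_tsub_right h.1 m⟩
  · rintro ⟨m, j⟩ h
    simp only [mem_sigma, mem_Iic] at h ⊢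
    exact ⟨le_tsub_iff_left h.1 |>.mp h.2, le_self_add⟩
  · rintro ⟨l, m⟩ h
    simp only [mem_sigma, mem_Iic] at h
    simp [add_tsub_cancel_of_le h.2]
  · rintro ⟨m, j⟩ -
    simp
  · rintro ⟨l, m⟩ h
    simp only [mem_sigma, mem_Iic] at h
    rw [tsub_tsub, add_tsub_cancel_of_le h.2, mul_assoc]

lemma sub_conv : conv (A - B) C = conv A C - conv B C := by
  funext k
  simp [conv, sub_mul]

lemma conv_sub : conv A (B - C) = conv A B - conv A C := by
  funext k
  simp [conv, mul_sub]

lemma conv_sum {ι : Type*} (t : Finset ι) (F : ι → (Fin d → ℕ) → Matrix (Fin s) (Fin s) ℝ) :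
    conv A (∑ i ∈ t, F i) = ∑ i ∈ t, conv A (F i) := by
  funext k
  simp only [conv, Finset.sum_apply, mul_sum]
  exact sum_comm

lemma sum_conv {ι : Type*} (t : Finset ι) (F : ι → (Fin d → ℕ) → Matrix (Fin s) (Fin s) ℝ) :
    conv (∑ i ∈ t, F i) A = ∑ i ∈ t, conv (F i) A := by
  funext k
  simp only [conv, Finset.sum_apply, sum_mul]
  exact sum_comm

lemma mul_const_conv (M : Matrix (Fin s) (Fin s) ℝ) :
    conv (fun l => A l * M) B = conv A (fun l => M * B l) := by
  funext k
  simp [conv, mul_assoc]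

lemma const_mul_conv_mul_const (M N : Matrix (Fin s) (Fin s) ℝ) :
    conv (fun l => M * A l) (fun l => B l * N) = fun k => M * conv A B k * N := by
  funext k
  simp [conv, mul_sum, sum_mul, mul_assoc]

lemma conv_congr_right {k : Fin d → ℕ} (h : ∀ m ≤ k, B m = C m) :
    conv A B k = conv A C k :=
  sum_congr rfl fun _ _ => by rw [h _ tsub_le_self]

lemma conv_congr_left {k : Fin d → ℕ} (h : ∀ m ≤ k, A m = B m) :
    conv A C k = conv B C k :=
  sum_congr rfl fun l hl => by rw [h l (mem_Iic.mp hl)]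

lemma conv_inverse_unique {B' : (Fin d → ℕ) → Matrix (Fin s) (Fin s) ℝ}
    (hB : conv B A = oneSeq) (hB' : conv A B' = oneSeq) : B = B' := by
  calc B = conv B (conv A B') := by rw [hB', conv_oneSeq]
    _ = B' := by rw [← conv_assoc, hB, oneSeq_conv]

end Convolution

section NeumannSeries

variable {d s : ℕ} (C : (Fin d → ℕ) → Matrix (Fin s) (Fin s) ℝ)

lemma convPow_succ (n : ℕ) : convPow C (n + 1) = conv C (convPow C n) := rfl

lemma convPow_succ' (n : ℕ) : convPow C (n + 1) = conv (convPow C n) C := by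
  induction n with
  | zero => exact (conv_oneSeq C).trans (oneSeq_conv C).symm
  | succ n ih => exact (congrArg (conv C) ih).trans (conv_assoc C _ C).symm

lemma convPow_eq_zero_of_sum_lt (hC : C 0 = 0) {n : ℕ} {k : Fin d → ℕ} (hk : ∑ i, k i < n) :
    convPow C n k = 0 := by
  induction n generalizing k with
  | zero => omega
  | succ n ih =>
    refine sum_eq_zero fun l hl => ?_
    rcases eq_or_ne l 0 with rfl | hl0
    · rw [hC, zero_mul]
    · have := sum_tsub_lt_sum (mem_Iic.mp hl) hl0
      rw [ih (by omega), mul_zero]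

lemma oneSeq_sub_conv_sum_convPow (N : ℕ) :
    conv (oneSeq - C) (∑ n ∈ range N, convPow C n) = oneSeq - convPow C N := by
  rw [sub_conv, oneSeq_conv, conv_sum]
  simp only [← convPow_succ]
  rw [← sum_sub_distrib, sum_range_sub']
  rfl

lemma sum_convPow_conv_oneSeq_sub (N : ℕ) :
    conv (∑ n ∈ range N, convPow C n) (oneSeq - C) = oneSeq - convPow C N := by
  rw [conv_sub, conv_oneSeq, sum_conv]
  simp only [← convPow_succ']
  rw [← sum_sub_distrib, sum_range_sub']
  rfl

/-- The Neumann series `Σₙ C^(n)`, cut off at `n = k₁ + ⋯ + k_d`, beyond which its terms vanish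
when `C 0 = 0`. -/
noncomputable def neumannSeries : (Fin d → ℕ) → Matrix (Fin s) (Fin s) ℝ :=
  fun k => ∑ n ∈ range (∑ i, k i + 1), convPow C n k

lemma neumannSeries_eq_sum_range (hC : C 0 = 0) {N : ℕ} {k : Fin d → ℕ} (hk : ∑ i, k i < N) :
    neumannSeries C k = (∑ n ∈ range N, convPow C n) k := by
  rw [Finset.sum_apply]
  refine sum_subset (fun n hn => ?_) fun n _ hn => ?_
  · simp only [mem_range] at hn ⊢
    omega
  · simp only [mem_range, not_lt] at hn
    exact convPow_eq_zero_of_sum_lt C hC (by omega)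

lemma oneSeq_sub_conv_neumannSeries (hC : C 0 = 0) :
    conv (oneSeq - C) (neumannSeries C) = oneSeq := by
  funext k
  calc conv (oneSeq - C) (neumannSeries C) k
      = conv (oneSeq - C) (∑ n ∈ range (∑ i, k i + 1), convPow C n) k :=
        conv_congr_right _ _ _ fun m hm =>
          neumannSeries_eq_sum_range C hC (Nat.lt_succ_of_le (sum_le_sum fun i _ => hm i))
    _ = oneSeq k := by
        rw [oneSeq_sub_conv_sum_convPow, Pi.sub_apply,
          convPow_eq_zero_of_sum_lt C hC (Nat.lt_succ_self _), sub_zero]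

lemma neumannSeries_conv_oneSeq_sub (hC : C 0 = 0) :
    conv (neumannSeries C) (oneSeq - C) = oneSeq := by
  funext k
  calc conv (neumannSeries C) (oneSeq - C) k
      = conv (∑ n ∈ range (∑ i, k i + 1), convPow C n) (oneSeq - C) k :=
        conv_congr_left _ _ _ fun m hm =>
          neumannSeries_eq_sum_range C hC (Nat.lt_succ_of_le (sum_le_sum fun i _ => hm i))
    _ = oneSeq k := by
        rw [sum_convPow_conv_oneSeq_sub, Pi.sub_apply,
          convPow_eq_zero_of_sum_lt C hC (Nat.lt_succ_self _), sub_zero]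

end NeumannSeries

theorem conv_inverse_formula {d s : ℕ}
    (A : (Fin d → ℕ) → Matrix (Fin s) (Fin s) ℝ) (hA : IsUnit (A 0)) :
    (∃! B : (Fin d → ℕ) → Matrix (Fin s) (Fin s) ℝ,
        conv A B = oneSeq ∧ conv B A = oneSeq) ∧
    (∀ B : (Fin d → ℕ) → Matrix (Fin s) (Fin s) ℝ,
        conv A B = oneSeq ∧ conv B A = oneSeq →
        ∀ k : Fin d → ℕ,
          B k = (A 0)⁻¹ *
            ∑ n ∈ Finset.range (∑ i, k i + 1),
              convPow (oneSeq - fun l => A l * (A 0)⁻¹) n k) := by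
  have hdet : IsUnit (A 0).det := (Matrix.isUnit_iff_isUnit_det _).mp hA
  set A₀ : (Fin d → ℕ) → Matrix (Fin s) (Fin s) ℝ := fun l => A l * (A 0)⁻¹
  have hA₀ : oneSeq - (oneSeq - A₀) = A₀ := sub_sub_cancel _ _
  have hC : (oneSeq - A₀ : (Fin d → ℕ) → Matrix (Fin s) (Fin s) ℝ) 0 = 0 := by
    simp [A₀, oneSeq, Matrix.mul_nonsing_inv _ hdet]
  set B₀ : (Fin d → ℕ) → Matrix (Fin s) (Fin s) ℝ :=
    fun k => (A 0)⁻¹ * neumannSeries (oneSeq - A₀) k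
  have hAB₀ : conv A B₀ = oneSeq := by
    rw [← mul_const_conv]
    simpa only [hA₀] using oneSeq_sub_conv_neumannSeries _ hC
  have hB₀A : conv B₀ A = oneSeq := by
    have hA_eq : A = fun l => A₀ l * A 0 := by
      funext l; simp [A₀, mul_assoc, Matrix.nonsing_inv_mul _ hdet]
    conv_lhs => rw [hA_eq]
    have hSA₀ := neumannSeries_conv_oneSeq_sub _ hC
    rw [hA₀] at hSA₀
    rw [const_mul_conv_mul_const, hSA₀]
    funext k
    by_cases hk : k = 0 <;> simp [oneSeq, hk, Matrix.nonsing_inv_mul _ hdet]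
  have huniq : ∀ B, conv A B = oneSeq ∧ conv B A = oneSeq → B = B₀ :=
    fun B hB => conv_inverse_unique A B hB.2 hAB₀
  exact ⟨⟨B₀, ⟨hAB₀, hB₀A⟩, huniq⟩, fun B hB k => congrFun (huniq B hB) k⟩
end

section
/- A matrix sequence A : ℕ^d → Matrix (Fin s) (Fin s) ℝ has a convolutional inverse if and only if A can be written as a finite convolution product of elementary matrix sequences (row-swap sequences E_{ij}, scaling sequences D_i[α] with α convolutionally invertible, and row-addition sequences R_{ij}[α]). -/
noncomputable def deltaSeq {d : ℕ} : (Fin d → ℕ) → ℝ :=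
  fun k => if k = 0 then 1 else 0

/-- Elementary matrix sequences: row swaps, scalings by a convolutionally
invertible real sequence, and row additions. -/
def IsElementary {d s : ℕ} (E : (Fin d → ℕ) → Matrix (Fin s) (Fin s) ℝ) : Prop :=
  (∃ i j : Fin s,
      E = fun k => if k = 0
        then (1 : Matrix (Fin s) (Fin s) ℝ).submatrix (Equiv.swap i j) id else 0) ∨
  (∃ (i : Fin s) (α : (Fin d → ℕ) → ℝ), α 0 ≠ 0 ∧
      E = fun k => Matrix.of fun a b =>
        if a = b then (if a = i then α k else deltaSeq k) else 0) ∨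
  (∃ (i j : Fin s) (α : (Fin d → ℕ) → ℝ), i ≠ j ∧
      E = fun k => Matrix.of fun a b =>
        if a = b then deltaSeq k else if a = j ∧ b = i then α k else 0)

/-!
Sequences `ℕ^d → ℝ` are the coefficient functions of power series in `d` variables, and
convolution is their product. So `A` is convolutionally invertible iff the corresponding matrix
over `ℝ⟦X₁, …, X_d⟧` is invertible, and the elementary sequences correspond to the elementary
matrices: swaps, scalings by units (power series with nonzero constant term) and transvections.
The power series ring is local, and over a local ring Gaussian elimination goes through: expanding
the determinant along the first column shows that some entry of that column is a unit; a swap and a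
scaling make it a pivot `1`, and then `M = L * diag(1, B) * U` with `L`, `U` products of
transvections and `B` invertible of smaller size.
-/

namespace Matrix

section Elementary

variable (n R : Type*) [DecidableEq n] [CommRing R]

def elementaryMatrices : Set (Matrix n n R) :=
  {M | (∃ i j, M = swap R i j) ∨ (∃ i, ∃ u : Rˣ, M = diagonal (Pi.mulSingle i (u : R))) ∨
    ∃ i j c, i ≠ j ∧ M = transvection i j c}

variable {n R} [Fintype n]

theorem isUnit_of_mem_elementaryMatrices {M : Matrix n n R} (hM : M ∈ elementaryMatrices n R) :
    IsUnit M := by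
  rcases hM with ⟨i, j, rfl⟩ | ⟨i, u, rfl⟩ | ⟨i, j, c, hij, rfl⟩
  · exact (GeneralLinearGroup.swap R i j).isUnit
  · refine isUnit_diagonal.2 (Pi.isUnit_iff.2 fun k => ?_)
    by_cases hk : k = i <;> simp [hk]
  · refine (isUnit_iff_isUnit_det _).2 ?_
    rw [det_transvection_of_ne _ _ hij]
    exact isUnit_one

theorem closure_elementaryMatrices_le :
    Submonoid.closure (elementaryMatrices n R) ≤ IsUnit.submonoid _ :=
  Submonoid.closure_le.2 fun _ => isUnit_of_mem_elementaryMatrices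

theorem one_add_sum_single_mem_closure {ι : Type*} (S : Finset ι) (f g : ι → n) (c : ι → R)
    (h : ∀ a ∈ S, ∀ b ∈ S, g a ≠ f b) :
    1 + ∑ a ∈ S, single (f a) (g a) (c a) ∈ Submonoid.closure (elementaryMatrices n R) := by
  classical
  induction S using Finset.induction with
  | empty => simp
  | @insert a S ha ih =>
    have hS : ∀ a ∈ S, ∀ b ∈ S, g a ≠ f b := fun x hx y hy =>
      h x (Finset.mem_insert_of_mem hx) y (Finset.mem_insert_of_mem hy)
    have hzero : single (f a) (g a) (c a) * ∑ b ∈ S, single (f b) (g b) (c b) = 0 := by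
      rw [Finset.mul_sum]
      exact Finset.sum_eq_zero fun b hb => single_mul_single_of_ne _ _ _ _
        (h a (S.mem_insert_self a) b (Finset.mem_insert_of_mem hb)) _
    have hfactor : 1 + ∑ b ∈ insert a S, single (f b) (g b) (c b) =
        transvection (f a) (g a) (c a) * (1 + ∑ b ∈ S, single (f b) (g b) (c b)) := by
      rw [Finset.sum_insert ha, transvection, add_mul, one_mul, mul_add, mul_one, hzero, add_zero]
      abel
    rw [hfactor]
    have hne := (h a (S.mem_insert_self a) a (S.mem_insert_self a)).symm
    exact Submonoid.mul_mem _ (Submonoid.subset_closure <| .inr <| .inr ⟨_, _, _, hne, rfl⟩)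
      (ih hS)

end Elementary

section CornerOne

variable {R : Type*} [Zero R] [One R] {m : ℕ}

def cornerOne (B : Matrix (Fin m) (Fin m) R) : Matrix (Fin (m + 1)) (Fin (m + 1)) R :=
  of (Fin.cons (Fin.cons 1 0) fun a => Fin.cons 0 (B a))

@[simp] theorem cornerOne_zero_zero (B : Matrix (Fin m) (Fin m) R) : cornerOne B 0 0 = 1 := rfl
@[simp] theorem cornerOne_zero_succ (B : Matrix (Fin m) (Fin m) R) (b : Fin m) :
    cornerOne B 0 b.succ = 0 := rfl
@[simp] theorem cornerOne_succ_zero (B : Matrix (Fin m) (Fin m) R) (a : Fin m) :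
    cornerOne B a.succ 0 = 0 := rfl
@[simp] theorem cornerOne_succ_succ (B : Matrix (Fin m) (Fin m) R) (a b : Fin m) :
    cornerOne B a.succ b.succ = B a b := rfl

theorem cornerOne_one : cornerOne (1 : Matrix (Fin m) (Fin m) R) = 1 := by
  ext a b
  cases a using Fin.cases <;> cases b using Fin.cases <;>
    simp [one_apply, Fin.succ_ne_zero, (Fin.succ_ne_zero _).symm]

end CornerOne

variable {R : Type*} [CommRing R] {m : ℕ}

theorem one_add_sum_single_succ_zero_mul_apply (c : Fin m → R)
    (X : Matrix (Fin (m + 1)) (Fin (m + 1)) R) (i j : Fin (m + 1)) :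
    ((1 + ∑ a : Fin m, single a.succ (0 : Fin (m + 1)) (c a)) * X) i j =
      X i j + (Fin.cons 0 c : Fin (m + 1) → R) i * X 0 j := by
  rw [add_mul, one_mul, add_apply, Matrix.sum_mul, sum_apply]
  cases i using Fin.cases with
  | zero => simp [single_mul_apply_of_ne, (Fin.succ_ne_zero _).symm]
  | succ i =>
    rw [Finset.sum_eq_single i (fun b _ hb => single_mul_apply_of_ne _ _ _ _ _
      (Fin.succ_injective _ |>.ne hb.symm) _) (by simp), single_mul_apply_same]
    rfl

theorem mul_one_add_sum_single_zero_succ_apply (r : Fin m → R)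
    (X : Matrix (Fin (m + 1)) (Fin (m + 1)) R) (i j : Fin (m + 1)) :
    (X * (1 + ∑ b : Fin m, single (0 : Fin (m + 1)) b.succ (r b))) i j =
      X i j + X i 0 * (Fin.cons 0 r : Fin (m + 1) → R) j := by
  rw [mul_add, mul_one, add_apply, Matrix.mul_sum, sum_apply]
  cases j using Fin.cases with
  | zero => simp [mul_single_apply_of_ne, (Fin.succ_ne_zero _).symm]
  | succ j =>
    rw [Finset.sum_eq_single j (fun b _ hb => mul_single_apply_of_ne _ _ _ _ _
      (Fin.succ_injective _ |>.ne hb.symm) _) (by simp), mul_single_apply_same]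
    rfl

theorem eq_mul_cornerOne_mul (Q : Matrix (Fin (m + 1)) (Fin (m + 1)) R) (hQ : Q 0 0 = 1) :
    Q = (1 + ∑ a : Fin m, single a.succ 0 (Q a.succ 0)) *
      cornerOne (of fun a b => Q a.succ b.succ - Q a.succ 0 * Q 0 b.succ) *
      (1 + ∑ b : Fin m, single 0 b.succ (Q 0 b.succ)) := by
  ext i j
  rw [mul_one_add_sum_single_zero_succ_apply, one_add_sum_single_succ_zero_mul_apply,
    one_add_sum_single_succ_zero_mul_apply]
  cases i using Fin.cases <;> cases j using Fin.cases <;> simp [hQ]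

theorem cornerOne_mul (B C : Matrix (Fin m) (Fin m) R) :
    cornerOne (B * C) = cornerOne B * cornerOne C := by
  ext a b
  cases a using Fin.cases <;> cases b using Fin.cases <;> simp [mul_apply, Fin.sum_univ_succ]

theorem det_cornerOne (B : Matrix (Fin m) (Fin m) R) : (cornerOne B).det = B.det := by
  rw [det_succ_column_zero, Fin.sum_univ_succ]
  simp only [Fin.val_zero, pow_zero, one_mul, cornerOne_zero_zero, Fin.succAbove_zero,
    cornerOne_succ_zero, mul_zero, zero_mul, Finset.sum_const_zero, add_zero]
  rfl

theorem cornerOne_mem_elementaryMatrices {B : Matrix (Fin m) (Fin m) R}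
    (hB : B ∈ elementaryMatrices (Fin m) R) :
    cornerOne B ∈ elementaryMatrices (Fin (m + 1)) R := by
  rcases hB with ⟨i, j, rfl⟩ | ⟨i, u, rfl⟩ | ⟨i, j, c, hij, rfl⟩
  · refine .inl ⟨i.succ, j.succ, ?_⟩
    ext a b
    cases a using Fin.cases <;> cases b using Fin.cases <;>
      simp [swap, (Fin.succ_injective _).swap_apply, Equiv.swap_apply_of_ne_of_ne,
        Fin.succ_ne_zero, (Fin.succ_ne_zero _).symm]
  · refine .inr <| .inl ⟨i.succ, u, ?_⟩
    ext a b
    cases a using Fin.cases <;> cases b using Fin.cases <;>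
      simp [diagonal_apply, Pi.mulSingle_apply, (Fin.succ_ne_zero _).symm]
  · refine .inr <| .inr ⟨i.succ, j.succ, c, (Fin.succ_injective _).ne hij, ?_⟩
    ext a b
    cases a using Fin.cases <;> cases b using Fin.cases <;>
      simp [transvection, one_apply, single_apply, (Fin.succ_ne_zero _).symm]

theorem cornerOne_mem_closure {B : Matrix (Fin m) (Fin m) R}
    (hB : B ∈ Submonoid.closure (elementaryMatrices (Fin m) R)) :
    cornerOne B ∈ Submonoid.closure (elementaryMatrices (Fin (m + 1)) R) := by
  induction hB using Submonoid.closure_induction with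
  | mem B hB => exact Submonoid.subset_closure (cornerOne_mem_elementaryMatrices hB)
  | one => rw [cornerOne_one]; exact one_mem _
  | mul B C _ _ hB hC => rw [cornerOne_mul]; exact mul_mem hB hC

theorem exists_isUnit_apply_zero_of_isUnit [IsLocalRing R]
    {M : Matrix (Fin (m + 1)) (Fin (m + 1)) R} (hM : IsUnit M) : ∃ i, IsUnit (M i 0) := by
  have hdet := (isUnit_iff_isUnit_det M).1 hM
  rw [det_succ_column_zero] at hdet
  obtain ⟨i, -, hi⟩ := IsLocalRing.exists_of_isUnit_sum hdet
  exact ⟨i, isUnit_of_mul_isUnit_right (isUnit_of_mul_isUnit_left hi)⟩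

theorem mem_closure_elementaryMatrices_of_isUnit [IsLocalRing R] :
    ∀ {m : ℕ} {M : Matrix (Fin m) (Fin m) R}, IsUnit M →
      M ∈ Submonoid.closure (elementaryMatrices (Fin m) R)
  | 0, M, _ => Subsingleton.elim 1 M ▸ Submonoid.one_mem _
  | m + 1, M, hM => by
    obtain ⟨i, u, hu⟩ := exists_isUnit_apply_zero_of_isUnit hM
    set D : Matrix (Fin (m + 1)) (Fin (m + 1)) R := diagonal (Pi.mulSingle 0 ↑u)
    set Q : Matrix (Fin (m + 1)) (Fin (m + 1)) R :=
      diagonal (Pi.mulSingle 0 ((u⁻¹ : Rˣ) : R)) * (swap R 0 i * M)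
    have hQ : Q 0 0 = 1 := by simp [Q, diagonal_mul, ← hu]
    have hMQ : M = swap R 0 i * D * Q := by
      have hD : D * diagonal (Pi.mulSingle 0 ((u⁻¹ : Rˣ) : R)) = 1 := by
        rw [diagonal_mul_diagonal, ← Pi.mul_def, ← Pi.mulSingle_mul, Units.mul_inv, Pi.mulSingle_one]
        exact diagonal_one
      rw [mul_assoc, ← mul_assoc D, hD, one_mul, ← mul_assoc, swap_mul_self, one_mul]
    have hDQ := eq_mul_cornerOne_mul Q hQ
    set L : Matrix (Fin (m + 1)) (Fin (m + 1)) R := 1 + ∑ a : Fin m, single a.succ 0 (Q a.succ 0)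
    set U : Matrix (Fin (m + 1)) (Fin (m + 1)) R := 1 + ∑ b : Fin m, single 0 b.succ (Q 0 b.succ)
    set B : Matrix (Fin m) (Fin m) R := of fun a b => Q a.succ b.succ - Q a.succ 0 * Q 0 b.succ
    have hL : L ∈ Submonoid.closure (elementaryMatrices (Fin (m + 1)) R) :=
      one_add_sum_single_mem_closure _ _ _ _ fun _ _ b _ => (Fin.succ_ne_zero b).symm
    have hU : U ∈ Submonoid.closure (elementaryMatrices (Fin (m + 1)) R) :=
      one_add_sum_single_mem_closure _ _ _ _ fun a _ _ _ => Fin.succ_ne_zero a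
    have hB : IsUnit B := by
      have hQunit : IsUnit Q.det := (isUnit_iff_isUnit_det Q).1 <|
        (isUnit_of_mem_elementaryMatrices (.inr (.inl ⟨0, u⁻¹, rfl⟩))).mul
          ((isUnit_of_mem_elementaryMatrices (.inl ⟨0, i, rfl⟩)).mul hM)
      rw [hDQ, det_mul, det_mul, det_cornerOne] at hQunit
      exact (isUnit_iff_isUnit_det B).2 (isUnit_of_mul_isUnit_right (isUnit_of_mul_isUnit_left hQunit))
    rw [hMQ, hDQ, ← mul_assoc, ← mul_assoc]
    exact mul_mem (mul_mem (mul_mem (mul_mem (Submonoid.subset_closure (.inl ⟨0, i, rfl⟩))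
      (Submonoid.subset_closure (.inr (.inl ⟨0, u, rfl⟩)))) hL)
      (cornerOne_mem_closure (mem_closure_elementaryMatrices_of_isUnit hB))) hU

theorem isUnit_iff_mem_closure_elementaryMatrices [IsLocalRing R]
    {M : Matrix (Fin m) (Fin m) R} :
    IsUnit M ↔ M ∈ Submonoid.closure (elementaryMatrices (Fin m) R) :=
  ⟨mem_closure_elementaryMatrices_of_isUnit, fun h => closure_elementaryMatrices_le h⟩

end Matrix

open Finset.HasAntidiagonal in
theorem Finsupp.sum_antidiagonal_eq_sum_Iic {σ M : Type*} [Fintype σ] [DecidableEq σ]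
    [AddCommMonoid M] (l : σ →₀ ℕ) (f : (σ → ℕ) → (σ → ℕ) → M) :
    ∑ p ∈ antidiagonal l, f p.1 p.2 = ∑ k ∈ Finset.Iic ⇑l, f k (⇑l - k) := by
  refine Finset.sum_nbij' (fun p => p.1) (fun k => (equivFunOnFinite.symm k,
    equivFunOnFinite.symm (⇑l - k))) ?_ ?_ ?_ ?_ ?_
  · intro p hp
    rw [mem_antidiagonal] at hp
    simp [← hp]
  · intro k hk
    rw [Finset.mem_Iic] at hk
    rw [mem_antidiagonal]
    ext x
    simp [hk x]
  · intro p hp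
    rw [mem_antidiagonal] at hp
    ext x <;> simp [← hp]
  · intro k _
    simp
  · intro p hp
    rw [mem_antidiagonal] at hp
    simp [← hp]

noncomputable section PowerSeries

open MvPowerSeries

variable (σ n R : Type*) [Finite σ]

def seqEquivMvPowerSeries : ((σ → ℕ) → R) ≃ MvPowerSeries σ R :=
  Finsupp.equivFunOnFinite.symm.arrowCongr (Equiv.refl R)

def matrixSeqEquiv : ((σ → ℕ) → Matrix n n R) ≃ Matrix n n (MvPowerSeries σ R) where
  toFun A := Matrix.of fun i j => seqEquivMvPowerSeries σ R fun k => A k i j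
  invFun N k := Matrix.of fun i j => (seqEquivMvPowerSeries σ R).symm (N i j) k
  left_inv A := by funext k; ext i j; simp
  right_inv N := by ext i j; simp

variable {σ n R}

@[simp] theorem matrixSeqEquiv_apply (A : (σ → ℕ) → Matrix n n R) (i j : n) :
    matrixSeqEquiv σ n R A i j = seqEquivMvPowerSeries σ R fun k => A k i j := rfl

variable [Semiring R]

@[simp] theorem coeff_seqEquivMvPowerSeries (α : (σ → ℕ) → R) (l : σ →₀ ℕ) :
    coeff l (seqEquivMvPowerSeries σ R α) = α l := rfl

theorem constantCoeff_seqEquivMvPowerSeries (α : (σ → ℕ) → R) :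
    constantCoeff (seqEquivMvPowerSeries σ R α) = α 0 := by
  rw [← coeff_zero_eq_constantCoeff_apply, coeff_seqEquivMvPowerSeries, Finsupp.coe_zero]

theorem seqEquivMvPowerSeries_symm_apply_zero (f : MvPowerSeries σ R) :
    (seqEquivMvPowerSeries σ R).symm f 0 = constantCoeff f := by
  conv_rhs => rw [← (seqEquivMvPowerSeries σ R).apply_symm_apply f]
  exact (constantCoeff_seqEquivMvPowerSeries _).symm

end PowerSeries

section Convolution

open MvPowerSeries Matrix

variable {d s : ℕ}

theorem matrixSeqEquiv_conv (A B : (Fin d → ℕ) → Matrix (Fin s) (Fin s) ℝ) :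
    matrixSeqEquiv _ _ _ (conv A B) = matrixSeqEquiv _ _ _ A * matrixSeqEquiv _ _ _ B := by
  ext i j l
  simp only [matrixSeqEquiv_apply, coeff_seqEquivMvPowerSeries, conv, Matrix.sum_apply,
    Matrix.mul_apply, map_sum, coeff_mul]
  rw [Finset.sum_comm]
  exact Finset.sum_congr rfl fun t _ =>
    (Finsupp.sum_antidiagonal_eq_sum_Iic l fun a b => A a i t * B b t j).symm

theorem matrixSeqEquiv_oneSeq :
    matrixSeqEquiv _ _ _ (oneSeq : (Fin d → ℕ) → Matrix (Fin s) (Fin s) ℝ) = 1 := by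
  ext i j l
  by_cases hl : l = 0 <;> by_cases hij : i = j <;> simp [oneSeq, Matrix.one_apply, coeff_one, hl, hij]

theorem matrixSeqEquiv_foldr_conv (L : List ((Fin d → ℕ) → Matrix (Fin s) (Fin s) ℝ)) :
    matrixSeqEquiv _ _ _ (L.foldr conv oneSeq) = (L.map (matrixSeqEquiv _ _ _)).prod := by
  induction L with
  | nil => exact matrixSeqEquiv_oneSeq
  | cons A L ih => rw [List.foldr_cons, matrixSeqEquiv_conv, ih, List.map_cons, List.prod_cons]

theorem seqEquivMvPowerSeries_deltaSeq : seqEquivMvPowerSeries (Fin d) ℝ deltaSeq = 1 := by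
  ext l
  by_cases hl : l = 0 <;> simp [deltaSeq, coeff_one, hl]

theorem matrixSeqEquiv_swap (i j : Fin s) :
    matrixSeqEquiv (Fin d) _ _ (fun k => if k = 0
        then (1 : Matrix (Fin s) (Fin s) ℝ).submatrix (Equiv.swap i j) id else 0) =
      swap _ i j := by
  ext a b l
  by_cases hl : l = 0 <;> by_cases hab : Equiv.swap i j a = b <;>
    simp [swap, PEquiv.toMatrix_apply, one_apply, coeff_one, hl, hab]

theorem matrixSeqEquiv_scale (i : Fin s) (α : (Fin d → ℕ) → ℝ) :
    matrixSeqEquiv _ _ _ (fun k => of fun a b =>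
        if a = b then (if a = i then α k else deltaSeq k) else 0) =
      diagonal (Pi.mulSingle i (seqEquivMvPowerSeries _ _ α)) := by
  ext a b l
  by_cases hl : l = 0 <;> by_cases hab : a = b <;> by_cases hai : a = i <;>
    simp [diagonal_apply, Pi.mulSingle_apply, deltaSeq, coeff_one, hl, hab, hai,
      apply_ite (coeff l), apply_ite constantCoeff, constantCoeff_seqEquivMvPowerSeries]

theorem matrixSeqEquiv_transvection {i j : Fin s} (hij : i ≠ j) (α : (Fin d → ℕ) → ℝ) :
    matrixSeqEquiv _ _ _ (fun k => of fun a b =>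
        if a = b then deltaSeq k else if a = j ∧ b = i then α k else 0) =
      transvection j i (seqEquivMvPowerSeries _ _ α) := by
  refine Matrix.ext fun a b => ?_
  rw [matrixSeqEquiv_apply, transvection, Matrix.add_apply, one_apply, single_apply]
  simp only [of_apply]
  by_cases hab : a = b
  · subst hab
    have : ¬(j = a ∧ i = a) := fun h => hij (h.2.trans h.1.symm)
    simp [this, seqEquivMvPowerSeries_deltaSeq]
  · by_cases h : a = j ∧ b = i
    · obtain ⟨rfl, rfl⟩ := h
      simp [hab]
    · have : ¬(j = a ∧ i = b) := fun h' => h ⟨h'.1.symm, h'.2.symm⟩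
      simp [hab, h, this]
      rfl

theorem isElementary_iff_mem_elementaryMatrices (E : (Fin d → ℕ) → Matrix (Fin s) (Fin s) ℝ) :
    IsElementary E ↔ matrixSeqEquiv _ _ _ E ∈ elementaryMatrices _ _ := by
  constructor
  · rintro (⟨i, j, rfl⟩ | ⟨i, α, hα, rfl⟩ | ⟨i, j, α, hij, rfl⟩)
    · exact .inl ⟨i, j, matrixSeqEquiv_swap i j⟩
    · have hu : IsUnit (seqEquivMvPowerSeries _ _ α) := isUnit_iff_constantCoeff.2 <| by
        rw [constantCoeff_seqEquivMvPowerSeries]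
        exact hα.isUnit
      exact .inr <| .inl ⟨i, hu.unit, matrixSeqEquiv_scale i α⟩
    · exact .inr <| .inr ⟨j, i, _, hij.symm, matrixSeqEquiv_transvection hij α⟩
  · rintro (⟨i, j, h⟩ | ⟨i, u, h⟩ | ⟨i, j, c, hij, h⟩)
    · exact .inl ⟨i, j, (matrixSeqEquiv _ _ _).injective (h.trans (matrixSeqEquiv_swap i j).symm)⟩
    · refine .inr <| .inl ⟨i, (seqEquivMvPowerSeries _ _).symm u, ?_,
        (matrixSeqEquiv _ _ _).injective ?_⟩
      · rw [seqEquivMvPowerSeries_symm_apply_zero]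
        exact (isUnit_iff_constantCoeff.1 u.isUnit).ne_zero
      · rw [h, matrixSeqEquiv_scale, Equiv.apply_symm_apply]
    · refine .inr <| .inr ⟨j, i, (seqEquivMvPowerSeries _ _).symm c, hij.symm,
        (matrixSeqEquiv _ _ _).injective ?_⟩
      rw [h, matrixSeqEquiv_transvection hij.symm, Equiv.apply_symm_apply]

theorem exists_conv_inverse_iff_isUnit (A : (Fin d → ℕ) → Matrix (Fin s) (Fin s) ℝ) :
    (∃ B, conv A B = oneSeq ∧ conv B A = oneSeq) ↔ IsUnit (matrixSeqEquiv _ _ _ A) := by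
  constructor
  · rintro ⟨B, hAB, hBA⟩
    exact ⟨⟨_, matrixSeqEquiv _ _ _ B,
      by rw [← matrixSeqEquiv_conv, hAB, matrixSeqEquiv_oneSeq],
      by rw [← matrixSeqEquiv_conv, hBA, matrixSeqEquiv_oneSeq]⟩, rfl⟩
  · rintro ⟨u, hu⟩
    refine ⟨(matrixSeqEquiv _ _ _).symm ↑u⁻¹, (matrixSeqEquiv _ _ _).injective ?_,
      (matrixSeqEquiv _ _ _).injective ?_⟩ <;>
      simp [matrixSeqEquiv_conv, matrixSeqEquiv_oneSeq, ← hu]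

end Convolution

theorem invertible_iff_product_of_elementary {d s : ℕ}
    (A : (Fin d → ℕ) → Matrix (Fin s) (Fin s) ℝ) :
    (∃ B : (Fin d → ℕ) → Matrix (Fin s) (Fin s) ℝ,
        conv A B = oneSeq ∧ conv B A = oneSeq) ↔
    (∃ L : List ((Fin d → ℕ) → Matrix (Fin s) (Fin s) ℝ),
        (∀ E ∈ L, IsElementary E) ∧ A = L.foldr conv oneSeq) := by
  rw [exists_conv_inverse_iff_isUnit, Matrix.isUnit_iff_mem_closure_elementaryMatrices]
  set Φ := matrixSeqEquiv (Fin d) (Fin s) ℝ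
  constructor
  · intro hA
    obtain ⟨L, hL, hprod⟩ := Submonoid.exists_list_of_mem_closure hA
    refine ⟨L.map Φ.symm, fun E hE => ?_, Φ.injective ?_⟩
    · obtain ⟨N, hN, rfl⟩ := List.mem_map.1 hE
      rw [isElementary_iff_mem_elementaryMatrices, Equiv.apply_symm_apply]
      exact hL N hN
    · rw [matrixSeqEquiv_foldr_conv, List.map_map, Equiv.self_comp_symm, List.map_id, hprod]
  · rintro ⟨L, hL, rfl⟩
    rw [matrixSeqEquiv_foldr_conv]
    refine Submonoid.list_prod_mem _ fun N hN => ?_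
    obtain ⟨E, hE, rfl⟩ := List.mem_map.1 hN
    exact Submonoid.subset_closure ((isElementary_iff_mem_elementaryMatrices E).1 (hL E hE))
end
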